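/- Let Φ = (V, 𝒬, 𝒞) be a CSP formula and p ∈ (0,1) a real with e·p·(Δ+1) < 1 and ℙ[¬c] ≤ p for every c ∈ 𝒞. Then Φ has a satisfying assignment, and for every variable v ∈ V and every value a ∈ Q_v, 1/q_v − ((1 − e·p)^{−(Δ+1)} − 1) ≤ Pr_{X∼μ}[X(v) = a] ≤ 1/q_v + ((1 − e·p)^{−(Δ+1)} − 1). -/

import Mathlib

open Finset

inductive PVal (α : Type) : Type where
  | val (a : α)
  | star
  | unacc

structure CSP (V : Type) [Fintype V] [DecidableEq V] where
  Q : V → Type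
  fintypeQ : ∀ v, Fintype (Q v)
  decEqQ : ∀ v, DecidableEq (Q v)
  card_two : ∀ v, 2 ≤ Fintype.card (Q v)
  C : Type
  fintypeC : Fintype C
  decEqC : DecidableEq C
  vbl : C → Finset V
  sat : C → ((v : V) → Q v) → Prop
  sat_local : ∀ c x y, (∀ v ∈ vbl c, x v = y v) → sat c x → sat c y

attribute [instance] CSP.fintypeQ CSP.decEqQ CSP.fintypeC CSP.decEqC

namespace CSP

variable {V : Type} [Fintype V] [DecidableEq V] (Φ : CSP V)

/-- The space of (full) assignments `𝒬 = ∏_v Q_v`. -/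
abbrev Assign := (v : V) → Φ.Q v

/-- Partial assignments `𝒬* = ∏_v (Q_v ∪ {⋆, ☆})`. -/
abbrev PAssign := (v : V) → PVal (Φ.Q v)

/-- A full assignment agrees with a partial assignment on all assigned variables. -/
def agrees (σ : Φ.PAssign) (x : Φ.Assign) : Prop :=
  ∀ (v : V) (a : Φ.Q v), σ v = PVal.val a → x v = a

/-- `v ∈ Λ(σ)` : the variable `v` is assigned a value from its domain in `σ`. -/
def assigned (σ : Φ.PAssign) (v : V) : Prop := ∃ a, σ v = PVal.val a

/-- The set of satisfying assignments. -/
def Sat : Set Φ.Assign := {x | ∀ c, Φ.sat c x}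

/-- The event `¬ c` that constraint `c` is violated. -/
def viol (c : Φ.C) : Set Φ.Assign := {x | ¬ Φ.sat c x}

/-- `ℙ[A]` : probability of the event `A` under the uniform product distribution. -/
noncomputable def prob (A : Set Φ.Assign) : ℝ :=
  (A.ncard : ℝ) / (Fintype.card Φ.Assign : ℝ)

/-- `ℙ[A | σ]` : probability of `A` under the uniform product distribution conditioned
on agreeing with `σ` on all assigned variables. -/
noncomputable def condProb (A : Set Φ.Assign) (σ : Φ.PAssign) : ℝ :=
  ((A ∩ {x | Φ.agrees σ x}).ncard : ℝ) / (({x : Φ.Assign | Φ.agrees σ x}).ncard : ℝ)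

/-- `Pr_μ[A]` : probability of `A` under the uniform distribution over satisfying assignments. -/
noncomputable def muProb (A : Set Φ.Assign) : ℝ :=
  ((A ∩ Φ.Sat).ncard : ℝ) / ((Φ.Sat.ncard : ℝ))

/-- the domain size `q`. -/
noncomputable def qmax : ℕ := Finset.univ.sup fun v : V => Fintype.card (Φ.Q v)

/-- the width `k`. -/
noncomputable def width : ℕ := Finset.univ.sup fun c : Φ.C => (Φ.vbl c).card

/-- the dependency degree `Δ`. -/
noncomputable def degree : ℕ :=
  Finset.univ.sup fun c : Φ.C =>
    (Finset.univ.filter fun c' : Φ.C => c' ≠ c ∧ ((Φ.vbl c) ∩ (Φ.vbl c')).Nonempty).card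

end CSP

/-!
Put `x = e·p`. The Lovász Local Lemma invariant `|¬c ∩ satOn S| ≤ x·|satOn S|` for `c ∉ S`
holds by strong induction on `S`: on the constraints of `S` sharing no variable with `c` the
event `¬c` is independent, which costs a factor `p`, and putting back the at most `Δ` others
loses a factor at most `(1 - x)^Δ ≥ e⁻¹ = p / x`. So dropping `m` constraints multiplies the
number of satisfying assignments by at most `(1 - x)^(-m)`. Once the at most `Δ + 1` constraints
containing `v` are dropped, `X(v)` is exactly uniform; hence
`Pr_μ[X(v) = b] ≤ (1 - x)^(-(Δ+1)) / q_v` for every `b`, and the lower bound follows by summing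
over the other values.
-/

theorem exp_neg_one_le_one_sub_pow {x : ℝ} (hx1 : x < 1) {n : ℕ}
    (h : x * (n + 1) ≤ 1) : Real.exp (-1) ≤ (1 - x) ^ n := by
  have h1x : 0 < 1 - x := sub_pos.2 hx1
  have hbase : Real.exp (-(x / (1 - x))) ≤ 1 - x := by
    have h := Real.add_one_le_exp (x / (1 - x))
    rw [Real.exp_neg, inv_le_comm₀ (Real.exp_pos _) h1x]
    calc (1 - x)⁻¹ = x / (1 - x) + 1 := by field_simp; ring
      _ ≤ _ := h
  calc Real.exp (-1) ≤ Real.exp (-(x / (1 - x)) * n) := by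
        rw [Real.exp_le_exp, neg_mul, neg_le_neg_iff, div_mul_eq_mul_div, div_le_one h1x]
        linarith
    _ = Real.exp (-(x / (1 - x))) ^ n := by rw [← Real.exp_nat_mul, mul_comm]
    _ ≤ (1 - x) ^ n := pow_le_pow_left₀ (Real.exp_pos _).le hbase n

theorem abs_sub_inv_card_le_of_le_div_card {β : Type*} [Fintype β] {w : β → ℝ}
    (hsum : ∑ b, w b = 1) {t : ℝ} (ht : 1 ≤ t) (hw : ∀ b, w b ≤ t / Fintype.card β) (a : β) :
    |w a - 1 / Fintype.card β| ≤ t - 1 := by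
  classical
  have : Nonempty β := ⟨a⟩
  set q : ℝ := (Fintype.card β : ℝ)
  have hq : 1 ≤ q := Nat.one_le_cast.2 Fintype.card_pos
  have hrest : ∑ b ∈ univ.erase a, w b ≤ (q - 1) * (t / q) := by
    calc ∑ b ∈ univ.erase a, w b ≤ (univ.erase a).card • (t / q) :=
          sum_le_card_nsmul _ _ _ fun b _ => hw b
      _ = (q - 1) * (t / q) := by
        rw [card_erase_of_mem (mem_univ a), card_univ, nsmul_eq_mul,
          Nat.cast_pred Fintype.card_pos]
  have hsplit : w a + ∑ b ∈ univ.erase a, w b = 1 := by rw [add_sum_erase _ _ (mem_univ a), hsum]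
  rw [abs_sub_le_iff]
  constructor
  · have : w a ≤ 1 / q + (t - 1) / q := by rw [← add_div]; simpa using hw a
    have : (t - 1) / q ≤ t - 1 := div_le_self (by linarith) hq
    linarith
  · have : (q - 1) * (t / q) = t - (1 / q + (t - 1) / q) := by field_simp; ring
    have : 0 ≤ (t - 1) / q := div_nonneg (by linarith) (by linarith)
    linarith

section Counting

variable {ι : Type*} [Fintype ι] [DecidableEq ι] {α : ι → Type*} [∀ i, Fintype (α i)]

theorem ncard_mul_ncard_eq_ncard_inter_mul_card {s : Set ι} {A B : Set (∀ i, α i)}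
    (hA : DependsOn (· ∈ A) s) (hB : DependsOn (· ∈ B) sᶜ) :
    A.ncard * B.ncard = (A ∩ B).ncard * Fintype.card (∀ i, α i) := by
  classical
  -- swapping the coordinates outside `s` is a bijection `A × B ≃ (A ∩ B) × univ`
  let swap : (∀ i, α i) × (∀ i, α i) → (∀ i, α i) × (∀ i, α i) :=
    fun z => (s.piecewise z.1 z.2, s.piecewise z.2 z.1)
  have hswap : Function.Involutive swap := by
    intro z
    ext i <;> by_cases hi : i ∈ s <;> simp [swap, hi]
  have hpre : swap ⁻¹' (A ×ˢ B) = (A ∩ B) ×ˢ Set.univ := by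
    ext ⟨y, z⟩
    have h₁ : (s.piecewise y z ∈ A) = (y ∈ A) := hA fun i hi => by simp [hi]
    have h₂ : (s.piecewise z y ∈ B) = (y ∈ B) :=
      hB fun i hi => by simp [Set.notMem_of_mem_compl hi]
    simp [swap, h₁, h₂]
  rw [← Set.ncard_prod, ← Set.ncard_preimage_of_injective_subset_range hswap.injective
    (by simp [hswap.surjective.range_eq]), hpre, Set.ncard_prod, Set.ncard_univ,
    Nat.card_eq_fintype_card]

theorem ncard_apply_eq_mul_card (i : ι) (a : α i) :
    {x : ∀ j, α j | x i = a}.ncard * Fintype.card (α i) = Fintype.card (∀ j, α j) := by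
  have hpre : {x : ∀ j, α j | x i = a} = Equiv.piSplitAt i α ⁻¹' ({a} ×ˢ Set.univ) := by
    ext x; simp
  rw [hpre, Set.ncard_preimage_of_injective_subset_range (Equiv.injective _) (by simp),
    Set.ncard_prod, Set.ncard_singleton, Set.ncard_univ, Nat.card_eq_fintype_card,
    Fintype.card_congr (Equiv.piSplitAt i α), Fintype.card_prod]
  ring

end Counting

theorem ncard_eq_sum_ncard_inter_fiber {γ β : Type*} [Fintype β] [DecidableEq β] (f : γ → β)
    {T : Set γ} (hT : T.Finite) : T.ncard = ∑ b, ({y | f y = b} ∩ T).ncard := by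
  lift T to Finset γ using hT
  rw [Set.ncard_coe_finset, card_eq_sum_card_fiberwise fun y _ => mem_univ (f y)]
  refine sum_congr rfl fun b _ => ?_
  rw [← Set.ncard_coe_finset, coe_filter]
  congr 1
  ext y
  simp [and_comm]

namespace CSP

variable {V : Type} [Fintype V] [DecidableEq V] (Φ : CSP V)

def satOn (S : Finset Φ.C) : Set Φ.Assign := {x | ∀ c ∈ S, Φ.sat c x}

def neighbors (c : Φ.C) : Finset Φ.C :=
  univ.filter fun c' => c' ≠ c ∧ (Φ.vbl c ∩ Φ.vbl c').Nonempty

variable {Φ}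

theorem satOn_univ : Φ.satOn univ = Φ.Sat := by
  ext x; simp [satOn, Sat]

theorem satOn_empty : Φ.satOn ∅ = Set.univ := by
  ext x; simp [satOn]

theorem satOn_anti {R S : Finset Φ.C} (h : R ⊆ S) : Φ.satOn S ⊆ Φ.satOn R :=
  fun _ hx c hc => hx c (h hc)

theorem ncard_satOn_insert_add (c : Φ.C) (T : Finset Φ.C) :
    (Φ.satOn (insert c T)).ncard + (Φ.viol c ∩ Φ.satOn T).ncard = (Φ.satOn T).ncard := by
  have hdiff : Φ.satOn (insert c T) = Φ.satOn T \ Φ.viol c := by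
    ext x; simp [satOn, viol]; tauto
  rw [hdiff, Set.inter_comm, add_comm, Set.ncard_inter_add_ncard_sdiff_eq_ncard]

theorem card_neighbors_le_degree (c : Φ.C) : (Φ.neighbors c).card ≤ Φ.degree :=
  le_sup (f := fun c => (Φ.neighbors c).card) (mem_univ c)

theorem card_filter_mem_vbl_le (v : V) :
    (univ.filter fun c => v ∈ Φ.vbl c).card ≤ Φ.degree + 1 := by
  obtain ⟨c, hc⟩ | hempty := (univ.filter fun c => v ∈ Φ.vbl c).eq_empty_or_nonempty.symm
  · have hsub : (univ.filter fun c => v ∈ Φ.vbl c) ⊆ insert c (Φ.neighbors c) := by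
      intro c' hc'
      rw [mem_insert, neighbors, mem_filter]
      by_cases h : c' = c
      · exact .inl h
      · exact .inr ⟨mem_univ _, h, v,
          mem_inter.2 ⟨(mem_filter.1 hc).2, (mem_filter.1 hc').2⟩⟩
    exact (card_le_card hsub).trans ((card_insert_le _ _).trans
      (Nat.succ_le_succ (card_neighbors_le_degree c)))
  · simp [hempty]

theorem card_pos_assign : 0 < Fintype.card Φ.Assign :=
  Fintype.card_pos_iff.2 ⟨fun v => Classical.choice
    (Fintype.card_pos_iff.1 (by linarith [Φ.card_two v]))⟩

theorem dependsOn_sat (c : Φ.C) : DependsOn (Φ.sat c) (Φ.vbl c : Set V) := fun x y h =>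
  propext ⟨Φ.sat_local c x y h, Φ.sat_local c y x fun v hv => (h v hv).symm⟩

theorem dependsOn_mem_satOn {R : Finset Φ.C} {s : Set V}
    (hR : ∀ c ∈ R, (Φ.vbl c : Set V) ⊆ s) : DependsOn (· ∈ Φ.satOn R) s := fun _ _ h =>
  propext <| forall₂_congr fun c hc => ((dependsOn_sat c).mono (hR c hc) h).to_iff

theorem ncard_viol_inter_satOn {c : Φ.C} {R : Finset Φ.C}
    (hR : ∀ c' ∈ R, Disjoint (Φ.vbl c) (Φ.vbl c')) :
    ((Φ.viol c ∩ Φ.satOn R).ncard : ℝ) = Φ.prob (Φ.viol c) * (Φ.satOn R).ncard := by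
  have hindep := ncard_mul_ncard_eq_ncard_inter_mul_card
    (fun _ _ h => congrArg Not (dependsOn_sat c h) :
      DependsOn (· ∈ Φ.viol c) (Φ.vbl c : Set V))
    (dependsOn_mem_satOn fun c' hc' => Set.subset_compl_iff_disjoint_left.2
      (disjoint_coe.2 (hR c' hc')))
  have hΩ : (0 : ℝ) < Fintype.card Φ.Assign := Nat.cast_pos.2 card_pos_assign
  rw [prob, div_mul_eq_mul_div, eq_div_iff hΩ.ne']
  exact_mod_cast hindep.symm

theorem ncard_apply_eq_inter_satOn_mul_card {v : V} {R : Finset Φ.C}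
    (hR : ∀ c ∈ R, v ∉ Φ.vbl c) (b : Φ.Q v) :
    ({x : Φ.Assign | x v = b} ∩ Φ.satOn R).ncard * Fintype.card (Φ.Q v) =
      (Φ.satOn R).ncard := by
  have hindep := ncard_mul_ncard_eq_ncard_inter_mul_card
    (fun _ _ h => by simp [h v rfl] :
      DependsOn (· ∈ {x : Φ.Assign | x v = b}) ({v} : Set V))
    (dependsOn_mem_satOn fun c hc w hw hwv => hR c hc (hwv ▸ hw))
  refine Nat.eq_of_mul_eq_mul_left (card_pos_assign (Φ := Φ)) ?_
  calc _ = {x : Φ.Assign | x v = b}.ncard * (Φ.satOn R).ncard * Fintype.card (Φ.Q v) := by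
        rw [hindep]; ring
    _ = _ := by rw [mul_right_comm, ncard_apply_eq_mul_card]

variable {x p : ℝ}

theorem pow_mul_ncard_satOn_sdiff_le (hx1 : x ≤ 1) {S : Finset Φ.C}
    (hS : ∀ T ⊂ S, ∀ c ∉ T, ((Φ.viol c ∩ Φ.satOn T).ncard : ℝ) ≤ x * (Φ.satOn T).ncard)
    {D : Finset Φ.C} (hD : D ⊆ S) :
    (1 - x) ^ D.card * ((Φ.satOn (S \ D)).ncard : ℝ) ≤ (Φ.satOn S).ncard := by
  induction D using Finset.induction_on with
  | empty => simp
  | insert c D hc ih =>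
    have hcS : c ∈ S \ D := mem_sdiff.2 ⟨hD (mem_insert_self c D), hc⟩
    have hT : insert c (S \ insert c D) = S \ D := by rw [sdiff_insert, insert_erase hcS]
    set T := S \ insert c D
    have hcT : c ∉ T := fun h => (mem_sdiff.1 h).2 (mem_insert_self c D)
    have hstep : (1 - x) * ((Φ.satOn T).ncard : ℝ) ≤ (Φ.satOn (S \ D)).ncard := by
      have hsplit : ((Φ.satOn (insert c T)).ncard : ℝ) + (Φ.viol c ∩ Φ.satOn T).ncard
          = (Φ.satOn T).ncard := by exact_mod_cast ncard_satOn_insert_add c T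
      have hviol := hS T
        (ssubset_iff_of_subset sdiff_subset |>.2 ⟨c, (mem_sdiff.1 hcS).1, hcT⟩) c hcT
      rw [← hT]
      linarith
    calc (1 - x) ^ (insert c D).card * ((Φ.satOn T).ncard : ℝ)
        = (1 - x) ^ D.card * ((1 - x) * (Φ.satOn T).ncard) := by
          rw [card_insert_of_notMem hc]; ring
      _ ≤ (1 - x) ^ D.card * (Φ.satOn (S \ D)).ncard :=
        mul_le_mul_of_nonneg_left hstep (pow_nonneg (sub_nonneg.2 hx1) _)
      _ ≤ _ := ih ((subset_insert c D).trans hD)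

theorem ncard_viol_inter_satOn_le (hx0 : 0 ≤ x) (hx1 : x ≤ 1)
    (hp : ∀ c, Φ.prob (Φ.viol c) ≤ p) (hpx : p ≤ x * (1 - x) ^ Φ.degree)
    (S : Finset Φ.C) {c : Φ.C} (hc : c ∉ S) :
    ((Φ.viol c ∩ Φ.satOn S).ncard : ℝ) ≤ x * (Φ.satOn S).ncard := by
  induction S using Finset.strongInduction generalizing c with
  | H S ih =>
  set D := S.filter fun c' => (Φ.vbl c ∩ Φ.vbl c').Nonempty
  have hD : D.card ≤ Φ.degree := (card_le_card fun c' hc' => by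
      simp only [D, mem_filter] at hc'
      exact mem_filter.2 ⟨mem_univ _, fun h => hc (h ▸ hc'.1), hc'.2⟩).trans
    (card_neighbors_le_degree c)
  have hdisj : ∀ c' ∈ S \ D, Disjoint (Φ.vbl c) (Φ.vbl c') := fun c' hc' => by
    simp only [D, mem_sdiff, mem_filter, not_and] at hc'
    exact disjoint_iff_inter_eq_empty.2 (not_nonempty_iff_eq_empty.1 (hc'.2 hc'.1))
  have hpow := pow_mul_ncard_satOn_sdiff_le hx1 (fun T hT c hc => ih T hT hc)
    (show D ⊆ S from filter_subset _ S)
  calc ((Φ.viol c ∩ Φ.satOn S).ncard : ℝ)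
      ≤ (Φ.viol c ∩ Φ.satOn (S \ D)).ncard := by
        exact_mod_cast Set.ncard_le_ncard
          (Set.inter_subset_inter_right _ (satOn_anti sdiff_subset)) (Set.toFinite _)
    _ = Φ.prob (Φ.viol c) * (Φ.satOn (S \ D)).ncard := ncard_viol_inter_satOn hdisj
    _ ≤ x * (1 - x) ^ D.card * (Φ.satOn (S \ D)).ncard := by
        gcongr
        exact (hp c).trans (hpx.trans (mul_le_mul_of_nonneg_left
          (pow_le_pow_of_le_one (by linarith) (by linarith) hD) hx0))
    _ ≤ x * (Φ.satOn S).ncard := by rw [mul_assoc]; gcongr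

theorem pow_mul_ncard_satOn_le_ncard_sat (hx0 : 0 ≤ x) (hx1 : x ≤ 1)
    (hp : ∀ c, Φ.prob (Φ.viol c) ≤ p) (hpx : p ≤ x * (1 - x) ^ Φ.degree) (R : Finset Φ.C) :
    (1 - x) ^ Rᶜ.card * ((Φ.satOn R).ncard : ℝ) ≤ Φ.Sat.ncard := by
  have h := pow_mul_ncard_satOn_sdiff_le hx1
    (fun T _ c hc => ncard_viol_inter_satOn_le hx0 hx1 hp hpx T hc) (subset_univ Rᶜ)
  rwa [← compl_eq_univ_sdiff, compl_compl, satOn_univ] at h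

theorem ncard_sat_pos (hx0 : 0 ≤ x) (hx1 : x < 1)
    (hp : ∀ c, Φ.prob (Φ.viol c) ≤ p) (hpx : p ≤ x * (1 - x) ^ Φ.degree) :
    0 < Φ.Sat.ncard := by
  have h := pow_mul_ncard_satOn_le_ncard_sat hx0 hx1.le hp hpx ∅
  rw [satOn_empty, Set.ncard_univ, Nat.card_eq_fintype_card] at h
  have : (0 : ℝ) < (1 - x) ^ (∅ : Finset Φ.C)ᶜ.card * Fintype.card Φ.Assign :=
    mul_pos (pow_pos (sub_pos.2 hx1) _) (Nat.cast_pos.2 card_pos_assign)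
  exact_mod_cast this.trans_le h

theorem muProb_apply_eq_le (hx0 : 0 ≤ x) (hx1 : x < 1)
    (hp : ∀ c, Φ.prob (Φ.viol c) ≤ p) (hpx : p ≤ x * (1 - x) ^ Φ.degree) (v : V) (b : Φ.Q v) :
    Φ.muProb {y | y v = b} ≤ ((1 - x) ^ (Φ.degree + 1))⁻¹ / Fintype.card (Φ.Q v) := by
  set R := univ.filter fun c => v ∉ Φ.vbl c
  have hR : Rᶜ.card ≤ Φ.degree + 1 := by
    convert card_filter_mem_vbl_le (Φ := Φ) v using 2
    ext c; simp [R]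
  have hfiber : (({y : Φ.Assign | y v = b} ∩ Φ.satOn R).ncard : ℝ) * Fintype.card (Φ.Q v)
      = (Φ.satOn R).ncard := by
    exact_mod_cast ncard_apply_eq_inter_satOn_mul_card (fun c hc => (mem_filter.1 hc).2) b
  have hcount := pow_mul_ncard_satOn_le_ncard_sat hx0 hx1.le hp hpx R
  have hSat : (0 : ℝ) < Φ.Sat.ncard := Nat.cast_pos.2 (ncard_sat_pos hx0 hx1 hp hpx)
  have hq : (0 : ℝ) < Fintype.card (Φ.Q v) := Nat.cast_pos.2 (Fintype.card_pos_iff.2 ⟨b⟩)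
  have hpow : 0 < (1 - x) ^ (Φ.degree + 1) := pow_pos (sub_pos.2 hx1) _
  have hmono : (({y : Φ.Assign | y v = b} ∩ Φ.Sat).ncard : ℝ)
      ≤ ({y : Φ.Assign | y v = b} ∩ Φ.satOn R).ncard := by
    rw [← satOn_univ]
    exact_mod_cast Set.ncard_le_ncard
      (Set.inter_subset_inter_right _ (satOn_anti (subset_univ R))) (Set.toFinite _)
  rw [muProb, div_le_div_iff₀ hSat hq, inv_mul_eq_div, le_div_iff₀ hpow]
  calc _ ≤ (({y : Φ.Assign | y v = b} ∩ Φ.satOn R).ncard : ℝ) * Fintype.card (Φ.Q v)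
          * (1 - x) ^ (Φ.degree + 1) := by gcongr
    _ ≤ (1 - x) ^ Rᶜ.card * (Φ.satOn R).ncard := by
        rw [hfiber, mul_comm]
        exact mul_le_mul_of_nonneg_right
          (pow_le_pow_of_le_one (by linarith) (by linarith) hR) (Nat.cast_nonneg _)
    _ ≤ _ := hcount

theorem sum_muProb_apply_eq (hSat : 0 < Φ.Sat.ncard) (v : V) :
    ∑ b : Φ.Q v, Φ.muProb {y | y v = b} = 1 := by
  simp only [muProb]
  rw [← sum_div, div_eq_one_iff_eq (Nat.cast_pos.2 hSat).ne']
  exact_mod_cast (ncard_eq_sum_ncard_inter_fiber (fun y : Φ.Assign => y v) (Set.toFinite _)).symm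

end CSP

/-- **Local uniformity.**
If `e·p·(Δ+1) < 1` and every constraint has violation probability at most `p`, then `Φ`
has a satisfying assignment and for every variable `v` and value `a ∈ Q_v`,
`1/q_v − ((1 − e·p)^{−(Δ+1)} − 1) ≤ Pr_{X∼μ}[X(v) = a] ≤ 1/q_v + ((1 − e·p)^{−(Δ+1)} − 1)`. -/
theorem statement2 {V : Type} [Fintype V] [DecidableEq V] (Φ : CSP V)
    (p : ℝ) (hp : p ∈ Set.Ioo (0 : ℝ) 1)
    (hlll : Real.exp 1 * p * ((Φ.degree : ℝ) + 1) < 1)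
    (hpc : ∀ c, Φ.prob (Φ.viol c) ≤ p) :
    Φ.Sat.Nonempty ∧
    ∀ (v : V) (a : Φ.Q v),
      (1 / (Fintype.card (Φ.Q v) : ℝ) - (((1 - Real.exp 1 * p) ^ (Φ.degree + 1))⁻¹ - 1)
          ≤ Φ.muProb {x : Φ.Assign | x v = a}) ∧
      Φ.muProb {x : Φ.Assign | x v = a}
          ≤ 1 / (Fintype.card (Φ.Q v) : ℝ) + (((1 - Real.exp 1 * p) ^ (Φ.degree + 1))⁻¹ - 1) := by
  set x := Real.exp 1 * p
  have hx0 : 0 ≤ x := mul_nonneg (Real.exp_pos 1).le hp.1.le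
  have hx1 : x < 1 := by nlinarith [(Nat.cast_nonneg Φ.degree : (0 : ℝ) ≤ _)]
  have hpx : p ≤ x * (1 - x) ^ Φ.degree := by
    calc p = x * Real.exp (-1) := by
          rw [Real.exp_neg, mul_right_comm, mul_inv_cancel₀ (Real.exp_pos 1).ne', one_mul]
      _ ≤ _ := mul_le_mul_of_nonneg_left (exp_neg_one_le_one_sub_pow hx1 hlll.le) hx0
  have hSat := CSP.ncard_sat_pos hx0 hx1 hpc hpx
  refine ⟨(Set.ncard_pos (Set.toFinite _)).1 hSat, fun v a => ?_⟩
  have ht : 1 ≤ ((1 - x) ^ (Φ.degree + 1))⁻¹ :=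
    one_le_inv₀ (pow_pos (by linarith) _) |>.2 (pow_le_one₀ (by linarith) (by linarith))
  have h := abs_sub_le_iff.1 <| abs_sub_inv_card_le_of_le_div_card
    (CSP.sum_muProb_apply_eq hSat v) ht (CSP.muProb_apply_eq_le hx0 hx1 hpc hpx v) a
  constructor <;> linarith [h.1, h.2]
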